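/- Let $f \in H^1(\mu,w)$ have absolutely continuous representative, let $(\psi_j')_{j\ge 1}$ be an orthogonal basis of $L^2(\mu,w)$, and assume $1/(w\rho) \in L^1(a,b)$. Then for all $x, x_0 \in (a,b)$: $f(x) = f(x_0) + \sum_{j \ge 1} \frac{\langle f', \psi_j' \rangle_w}{\|\psi_j'\|_w^2} (\psi_j(x) - \psi_j(x_0))$, with pointwise (in fact uniform) convergence of the series, where $\psi_j$ is an absolutely continuous primitive of $\psi_j'$. -/

import Mathlib

/-!
Realise `L²(μ, w)` as `L²` of the measure `w ρ dt` on `(a, b)`. Since `1/(wρ)` is integrable, the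
test function `u = 1_{(x₀, x]} / (wρ)` lies in this space, and for every `g` with `g' ∈ L²(μ, w)`
the fundamental theorem of calculus gives `⟨u, g'⟩_w = g(x) - g(x₀)`. Expanding `f'` in the
orthogonal basis `(ψⱼ')` and pairing the expansion with `u` termwise (the inner product is
continuous) yields the series; the case `x < x₀` follows by exchanging `x` and `x₀`.
-/

open MeasureTheory Set
open scoped RealInnerProductSpace

/-- Membership in the weighted Sobolev space `H¹(μ,w)` on `(a,b)`. -/
def MemH1 (a b : ℝ) (ρ w : ℝ → ℝ) (g g' : ℝ → ℝ) : Prop :=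
  (∀ x ∈ Set.Ioo a b, HasDerivAt g (g' x) x) ∧
  MeasureTheory.IntegrableOn (fun x => g x ^ 2 * ρ x) (Set.Ioo a b) ∧
  MeasureTheory.IntegrableOn (fun x => w x * g' x ^ 2 * ρ x) (Set.Ioo a b)

theorem hasSum_inner_of_orthogonal_of_complete {ι E : Type*} [NormedAddCommGroup E]
    [InnerProductSpace ℝ E] [CompleteSpace E] {G : ι → E} (hG : ∀ i, G i ≠ 0)
    (horth : Pairwise fun i j => ⟪G i, G j⟫ = 0)
    (hcomplete : ∀ X, (∀ i, ⟪G i, X⟫ = 0) → X = 0) (U F : E) :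
    HasSum (fun i => ⟪G i, F⟫ / ‖G i‖ ^ 2 * ⟪U, G i⟫) ⟪U, F⟫ := by
  classical
  set v : ι → E := fun i => ‖G i‖⁻¹ • G i
  have hv : Orthonormal ℝ v := by
    rw [orthonormal_iff_ite]
    intro i j
    split_ifs with hij
    · subst hij
      simp [v, norm_smul, hG i]
    · simp [v, real_inner_smul_left, real_inner_smul_right, horth hij]
  have hbot : (Submodule.span ℝ (range v))ᗮ = ⊥ := by
    refine (Submodule.eq_bot_iff _).2 fun X hX => hcomplete X fun i => ?_
    have := (Submodule.mem_orthogonal _ _).1 hX (v i) (Submodule.subset_span (mem_range_self i))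
    simpa [v, real_inner_smul_left, hG i] using this
  set B := HilbertBasis.mkOfOrthogonalEqBot hv hbot
  have hB : ⇑B = v := HilbertBasis.coe_mkOfOrthogonalEqBot hv hbot
  have h := (innerSL ℝ U).hasSum (B.hasSum_repr F)
  refine h.congr_fun fun i => ?_
  simp [hB, B.repr_apply_apply, v, real_inner_smul_left]
  field_simp

section WeightedL2

variable {α : Type*} [MeasurableSpace α] {μ : Measure α} {k : α → ℝ}

theorem integrable_withDensity_ofReal_iff (hk : AEMeasurable k μ) (hk0 : 0 ≤ᵐ[μ] k)
    {g : α → ℝ} :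
    Integrable g (μ.withDensity fun t => ENNReal.ofReal (k t)) ↔
      Integrable (fun t => g t * k t) μ := by
  rw [integrable_withDensity_iff_integrable_smul₀' hk.ennreal_ofReal
    (ae_of_all _ fun _ => ENNReal.ofReal_lt_top)]
  refine integrable_congr ?_
  filter_upwards [hk0] with t ht
  simp [ENNReal.toReal_ofReal ht, mul_comm]

theorem integral_withDensity_ofReal (hk : AEMeasurable k μ) (hk0 : 0 ≤ᵐ[μ] k) (g : α → ℝ) :
    ∫ t, g t ∂(μ.withDensity fun t => ENNReal.ofReal (k t)) = ∫ t, g t * k t ∂μ := by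
  rw [integral_withDensity_eq_integral_toReal_smul₀ hk.ennreal_ofReal
    (ae_of_all _ fun _ => ENNReal.ofReal_lt_top)]
  refine integral_congr_ae ?_
  filter_upwards [hk0] with t ht
  simp [ENNReal.toReal_ofReal ht, mul_comm]

theorem memLp_two_withDensity_ofReal_iff (hk : AEMeasurable k μ) (hk0 : 0 ≤ᵐ[μ] k)
    {g : α → ℝ} (hg : AEStronglyMeasurable g μ) :
    MemLp g 2 (μ.withDensity fun t => ENNReal.ofReal (k t)) ↔
      Integrable (fun t => g t ^ 2 * k t) μ := by
  rw [memLp_two_iff_integrable_sq (hg.mono_ac (withDensity_absolutelyContinuous _ _)),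
    integrable_withDensity_ofReal_iff hk hk0]

theorem inner_toLp_withDensity_ofReal (hk : AEMeasurable k μ) (hk0 : 0 ≤ᵐ[μ] k)
    {g h : α → ℝ} (hg : MemLp g 2 (μ.withDensity fun t => ENNReal.ofReal (k t)))
    (hh : MemLp h 2 (μ.withDensity fun t => ENNReal.ofReal (k t))) :
    ⟪hg.toLp g, hh.toLp h⟫ = ∫ t, g t * h t * k t ∂μ := by
  rw [L2.inner_def, ← integral_withDensity_ofReal hk hk0]
  refine integral_congr_ae ?_
  filter_upwards [hg.coeFn_toLp, hh.coeFn_toLp] with t hgt hht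
  simp [hgt, hht, mul_comm]

theorem Lp.eq_zero_of_forall_inner_toLp_withDensity_ofReal {ι : Type*} (hk : AEMeasurable k μ)
    (hk0 : 0 ≤ᵐ[μ] k) {φ : ι → α → ℝ}
    (hφ : ∀ i, MemLp (φ i) 2 (μ.withDensity fun t => ENNReal.ofReal (k t)))
    (hcomplete : ∀ m : α → ℝ, Measurable m → Integrable (fun t => m t ^ 2 * k t) μ →
      (∀ i, ∫ t, φ i t * m t * k t ∂μ = 0) → m =ᵐ[μ] 0)
    (X : Lp ℝ 2 (μ.withDensity fun t => ENNReal.ofReal (k t)))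
    (hX : ∀ i, ⟪(hφ i).toLp (φ i), X⟫ = 0) : X = 0 := by
  have hXm := Lp.aestronglyMeasurable X
  set m := hXm.mk X
  have hm : Measurable m := hXm.stronglyMeasurable_mk.measurable
  have hmLp : MemLp m 2 (μ.withDensity fun t => ENNReal.ofReal (k t)) :=
    (Lp.memLp X).ae_eq hXm.ae_eq_mk
  have hXeq : X = hmLp.toLp m := by
    rw [← Lp.toLp_coeFn X (Lp.memLp X)]
    exact MemLp.toLp_congr _ _ hXm.ae_eq_mk
  have hm0 : m =ᵐ[μ] 0 := by
    refine hcomplete m hm ((memLp_two_withDensity_ofReal_iff hk hk0 hm.aestronglyMeasurable).1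
      hmLp) fun i => ?_
    rw [← inner_toLp_withDensity_ofReal hk hk0 (hφ i) hmLp, ← hXeq, hX i]
  exact Lp.eq_zero_iff_ae_eq_zero.2
    (hXm.ae_eq_mk.trans ((withDensity_absolutelyContinuous _ _).ae_eq hm0))

end WeightedL2

theorem aestronglyMeasurable_of_hasDerivAt {S : Set ℝ} (hS : MeasurableSet S) {g g' : ℝ → ℝ}
    (hg : ∀ t ∈ S, HasDerivAt g (g' t) t) : AEStronglyMeasurable g' (volume.restrict S) :=
  (measurable_deriv g).aestronglyMeasurable.congr
    ((ae_restrict_mem hS).mono fun t ht => (hg t ht).deriv)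

section IntervalTestFunction

variable {S : Set ℝ} {k : ℝ → ℝ} {x₀ x : ℝ}

theorem memLp_indicator_inv_withDensity (hS : MeasurableSet S) (hsub : Ioc x₀ x ⊆ S)
    (hk : AEMeasurable k (volume.restrict S)) (hkpos : ∀ t ∈ S, 0 < k t)
    (hinv : IntegrableOn (fun t => (k t)⁻¹) S) :
    MemLp ((Ioc x₀ x).indicator fun t => (k t)⁻¹) 2
      ((volume.restrict S).withDensity fun t => ENNReal.ofReal (k t)) := by
  have hk0 : 0 ≤ᵐ[volume.restrict S] k := (ae_restrict_mem hS).mono fun t ht => (hkpos t ht).le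
  refine (memLp_two_withDensity_ofReal_iff hk hk0
    (hk.inv.indicator measurableSet_Ioc).aestronglyMeasurable).2 ?_
  have hint : Integrable ((Ioc x₀ x).indicator fun t => (k t)⁻¹) (volume.restrict S) := by
    rw [integrable_indicator_iff measurableSet_Ioc, IntegrableOn,
      Measure.restrict_restrict measurableSet_Ioc, inter_eq_self_of_subset_left hsub]
    exact hinv.mono_set hsub
  refine hint.congr ((ae_restrict_mem hS).mono fun t ht => ?_)
  by_cases htI : t ∈ Ioc x₀ x
  · simp only [indicator_of_mem htI, Pi.inv_apply]
    field_simp [(hkpos t ht).ne']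
  · simp [indicator_of_notMem htI]

theorem inner_indicator_inv_toLp_eq_sub (hS : MeasurableSet S) (hsub : Icc x₀ x ⊆ S)
    (hle : x₀ ≤ x) (hk : AEMeasurable k (volume.restrict S)) (hkpos : ∀ t ∈ S, 0 < k t)
    (hu : MemLp ((Ioc x₀ x).indicator fun t => (k t)⁻¹) 2
      ((volume.restrict S).withDensity fun t => ENNReal.ofReal (k t)))
    {g g' : ℝ → ℝ} (hg : ∀ t ∈ S, HasDerivAt g (g' t) t)
    (hg' : MemLp g' 2 ((volume.restrict S).withDensity fun t => ENNReal.ofReal (k t))) :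
    ⟪hu.toLp _, hg'.toLp g'⟫ = g x - g x₀ := by
  have hk0 : 0 ≤ᵐ[volume.restrict S] k := (ae_restrict_mem hS).mono fun t ht => (hkpos t ht).le
  have hIS : Ioc x₀ x ⊆ S := Ioc_subset_Icc_self.trans hsub
  have hrestr : (volume.restrict S).restrict (Ioc x₀ x) = volume.restrict (Ioc x₀ x) := by
    rw [Measure.restrict_restrict measurableSet_Ioc, inter_eq_self_of_subset_left hIS]
  have heq : (fun t => (Ioc x₀ x).indicator (fun t => (k t)⁻¹) t * g' t * k t)
      =ᵐ[volume.restrict S] (Ioc x₀ x).indicator g' := by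
    refine (ae_restrict_mem hS).mono fun t ht => ?_
    by_cases htI : t ∈ Ioc x₀ x
    · simp only [indicator_of_mem htI]
      field_simp [(hkpos t ht).ne']
    · simp [indicator_of_notMem htI]
  -- Cauchy–Schwarz in `L²(k dt)` makes `g'` integrable on `(x₀, x]`.
  have hint : IntegrableOn g' (Ioc x₀ x) := by
    have := (integrable_withDensity_ofReal_iff hk hk0).1 (hu.integrable_mul hg')
    rw [IntegrableOn, ← hrestr, ← IntegrableOn, ← integrable_indicator_iff measurableSet_Ioc]
    exact this.congr heq
  rw [inner_toLp_withDensity_ofReal hk hk0, integral_congr_ae heq,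
    integral_indicator measurableSet_Ioc, hrestr, ← intervalIntegral.integral_of_le hle]
  exact intervalIntegral.integral_eq_sub_of_hasDerivAt
    (fun t ht => hg t (hsub (uIcc_of_le hle ▸ ht)))
    ((intervalIntegrable_iff_integrableOn_Ioc_of_le hle).2 hint)

end IntervalTestFunction

theorem hasSum_sub_of_orthogonal_of_complete {S : Set ℝ} (hS : MeasurableSet S) {k : ℝ → ℝ}
    (hkpos : ∀ t ∈ S, 0 < k t) (hinv : IntegrableOn (fun t => (k t)⁻¹) S)
    {ι : Type*} {Φ φ : ι → ℝ → ℝ} (hΦ : ∀ i, ∀ t ∈ S, HasDerivAt (Φ i) (φ i t) t)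
    (hφ : ∀ i, IntegrableOn (fun t => φ i t ^ 2 * k t) S)
    (horth : Pairwise fun i j => ∫ t in S, φ i t * φ j t * k t = 0)
    (hpos : ∀ i, 0 < ∫ t in S, φ i t ^ 2 * k t)
    (hcomplete : ∀ m : ℝ → ℝ, Measurable m → IntegrableOn (fun t => m t ^ 2 * k t) S →
      (∀ i, ∫ t in S, φ i t * m t * k t = 0) → m =ᵐ[volume.restrict S] 0)
    {g g' : ℝ → ℝ} (hg : ∀ t ∈ S, HasDerivAt g (g' t) t)
    (hg' : IntegrableOn (fun t => g' t ^ 2 * k t) S) {x₀ x : ℝ} (hsub : Icc x₀ x ⊆ S)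
    (hle : x₀ ≤ x) :
    HasSum (fun i => (∫ t in S, φ i t * g' t * k t) / (∫ t in S, φ i t ^ 2 * k t) *
      (Φ i x - Φ i x₀)) (g x - g x₀) := by
  have hk0 : 0 ≤ᵐ[volume.restrict S] k := (ae_restrict_mem hS).mono fun t ht => (hkpos t ht).le
  have hk : AEMeasurable k (volume.restrict S) :=
    hinv.aemeasurable.inv.congr (ae_of_all _ fun t => inv_inv (k t))
  have hmem : ∀ {h h' : ℝ → ℝ}, (∀ t ∈ S, HasDerivAt h (h' t) t) →
      IntegrableOn (fun t => h' t ^ 2 * k t) S →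
      MemLp h' 2 ((volume.restrict S).withDensity fun t => ENNReal.ofReal (k t)) :=
    fun hh hint =>
      (memLp_two_withDensity_ofReal_iff hk hk0 (aestronglyMeasurable_of_hasDerivAt hS hh)).2 hint
  have hu := memLp_indicator_inv_withDensity hS (Ioc_subset_Icc_self.trans hsub) hk hkpos hinv
  set G := fun i => (hmem (hΦ i) (hφ i)).toLp (φ i)
  set F := (hmem hg hg').toLp g'
  set U := hu.toLp _
  have hGF : ∀ i, ⟪G i, F⟫ = ∫ t in S, φ i t * g' t * k t := fun i =>
    inner_toLp_withDensity_ofReal hk hk0 _ _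
  have hGnorm : ∀ i, ‖G i‖ ^ 2 = ∫ t in S, φ i t ^ 2 * k t := fun i => by
    rw [← real_inner_self_eq_norm_sq, inner_toLp_withDensity_ofReal hk hk0]
    simp only [sq]
  have hG0 : ∀ i, G i ≠ 0 := fun i hi => by
    have := hpos i
    rw [← hGnorm, hi, norm_zero] at this
    norm_num at this
  have hUG : ∀ i, ⟪U, G i⟫ = Φ i x - Φ i x₀ := fun i =>
    inner_indicator_inv_toLp_eq_sub hS hsub hle hk hkpos hu (hΦ i) _
  have hUF : ⟪U, F⟫ = g x - g x₀ := inner_indicator_inv_toLp_eq_sub hS hsub hle hk hkpos hu hg _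
  have h := hasSum_inner_of_orthogonal_of_complete hG0
    (fun i j hij => (inner_toLp_withDensity_ofReal hk hk0 _ _).trans (horth hij))
    (Lp.eq_zero_of_forall_inner_toLp_withDensity_ofReal hk hk0 _ hcomplete) U F
  simpa only [hGF, hGnorm, hUG, hUF] using h

theorem MemH1.hasSum_sub_of_le {a b : ℝ} {ρ w : ℝ → ℝ}
    (hρpos : ∀ x ∈ Ioo a b, 0 < ρ x) (hwpos : ∀ x ∈ Ioo a b, 0 < w x)
    (hinv : IntegrableOn (fun x => 1 / (w x * ρ x)) (Ioo a b))
    {ψ ψd : ℕ → ℝ → ℝ}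
    (hprim : ∀ j, ∀ x ∈ Ioo a b, HasDerivAt (ψ j) (ψd j x) x)
    (hmemd : ∀ j, IntegrableOn (fun x => w x * ψd j x ^ 2 * ρ x) (Ioo a b))
    (hdorth : ∀ j m, 1 ≤ j → 1 ≤ m → j ≠ m →
      ∫ x in Ioo a b, w x * ψd j x * ψd m x * ρ x = 0)
    (hdpos : ∀ j, 1 ≤ j → 0 < ∫ x in Ioo a b, w x * ψd j x ^ 2 * ρ x)
    (hcompleteW : ∀ f : ℝ → ℝ, Measurable f →
      IntegrableOn (fun x => w x * f x ^ 2 * ρ x) (Ioo a b) →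
      (∀ j, 1 ≤ j → ∫ x in Ioo a b, f x * ψd j x * w x * ρ x = 0) →
      ∀ᵐ x ∂(volume.restrict (Ioo a b)), f x = 0)
    {f f' : ℝ → ℝ} (hf : MemH1 a b ρ w f f') {x₀ x : ℝ} (hx₀ : x₀ ∈ Ioo a b)
    (hx : x ∈ Ioo a b) (hle : x₀ ≤ x) :
    HasSum (fun j : ℕ => if j = 0 then 0 else
        ((∫ t in Ioo a b, w t * f' t * ψd j t * ρ t) /
          (∫ t in Ioo a b, w t * ψd j t ^ 2 * ρ t)) * (ψ j x - ψ j x₀))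
      (f x - f x₀) := by
  have hweight : ∀ u v : ℝ → ℝ, ∫ t in Ioo a b, u t * v t * (w t * ρ t) =
      ∫ t in Ioo a b, w t * u t * v t * ρ t := fun u v => by
    congr 1 with t
    ring
  have hweight_sq : ∀ u : ℝ → ℝ, (fun t => u t ^ 2 * (w t * ρ t)) = fun t => w t * u t ^ 2 * ρ t :=
    fun u => funext fun t => by ring
  have h := hasSum_sub_of_orthogonal_of_complete measurableSet_Ioo (k := fun t => w t * ρ t)
    (fun t ht => mul_pos (hwpos t ht) (hρpos t ht)) (by simpa only [one_div] using hinv)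
    (fun n => hprim (n + 1)) (fun n => by rw [hweight_sq]; exact hmemd (n + 1))
    (fun m n hmn => (hweight _ _).trans (hdorth _ _ (by omega) (by omega) (by omega)))
    (fun n => by rw [hweight_sq]; exact hdpos (n + 1) n.succ_pos)
    (fun m hm hint horth => hcompleteW m hm (by rwa [← hweight_sq]) fun j hj => by
      obtain ⟨n, rfl⟩ := Nat.exists_eq_add_of_le' hj
      rw [← horth n]
      congr 1 with t
      ring)
    hf.1 (by rw [hweight_sq]; exact hf.2.2) (Icc_subset_Ioo hx₀.1 hx.2) hle
  rw [← hasSum_nat_add_iff' 1]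
  simp only [Finset.sum_range_one, if_pos, sub_zero, Nat.add_one_ne_zero, if_false]
  refine h.congr_fun fun n => ?_
  rw [hweight, hweight_sq]
  congr 3 with t
  ring

theorem stmt7_general (a b : ℝ) (ρ w : ℝ → ℝ)
    (hρpos : ∀ x ∈ Ioo a b, 0 < ρ x) (hwpos : ∀ x ∈ Ioo a b, 0 < w x)
    (hinv : IntegrableOn (fun x => 1 / (w x * ρ x)) (Ioo a b))
    (ψ ψd : ℕ → ℝ → ℝ)
    (hprim : ∀ j, ∀ x ∈ Ioo a b, HasDerivAt (ψ j) (ψd j x) x)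
    (hmemd : ∀ j, IntegrableOn (fun x => w x * ψd j x ^ 2 * ρ x) (Ioo a b))
    (hdorth : ∀ j m, 1 ≤ j → 1 ≤ m → j ≠ m →
      ∫ x in Ioo a b, w x * ψd j x * ψd m x * ρ x = 0)
    (hdpos : ∀ j, 1 ≤ j → 0 < ∫ x in Ioo a b, w x * ψd j x ^ 2 * ρ x)
    (hcompleteW : ∀ f : ℝ → ℝ, Measurable f →
      IntegrableOn (fun x => w x * f x ^ 2 * ρ x) (Ioo a b) →
      (∀ j, 1 ≤ j → ∫ x in Ioo a b, f x * ψd j x * w x * ρ x = 0) →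
      ∀ᵐ x ∂(volume.restrict (Ioo a b)), f x = 0)
    (f f' : ℝ → ℝ) (hf : MemH1 a b ρ w f f') :
    ∀ x ∈ Ioo a b, ∀ x₀ ∈ Ioo a b,
      HasSum (fun j : ℕ => if j = 0 then 0 else
          ((∫ t in Ioo a b, w t * f' t * ψd j t * ρ t) /
            (∫ t in Ioo a b, w t * ψd j t ^ 2 * ρ t)) * (ψ j x - ψ j x₀))
        (f x - f x₀) := by
  intro x hx x₀ hx₀
  rcases le_total x₀ x with hle | hle
  · exact hf.hasSum_sub_of_le hρpos hwpos hinv hprim hmemd hdorth hdpos hcompleteW hx₀ hx hle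
  · have h := (hf.hasSum_sub_of_le hρpos hwpos hinv hprim hmemd hdorth hdpos hcompleteW
      hx hx₀ hle).neg
    rw [neg_sub] at h
    refine h.congr_fun fun j => ?_
    split_ifs <;> ring

/-- Pointwise expansion of `f ∈ H¹(μ,w)` in terms of primitives of an orthogonal basis
`(ψⱼ')_{j≥1}` of `L²(μ,w)`: for all `x, x₀ ∈ (a,b)`,
`f(x) = f(x₀) + ∑_{j≥1} (⟨f',ψⱼ'⟩_w / ‖ψⱼ'‖_w²)(ψⱼ(x) - ψⱼ(x₀))`, with convergence. -/
theorem stmt7 (a b : ℝ) (hab : a < b) (ρ w : ℝ → ℝ)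
    (hρpos : ∀ x ∈ Ioo a b, 0 < ρ x) (hwpos : ∀ x ∈ Ioo a b, 0 < w x)
    (hprob : ∫ x in Ioo a b, ρ x = 1)
    (hinv : IntegrableOn (fun x => 1 / (w x * ρ x)) (Ioo a b))
    (ψ ψd : ℕ → ℝ → ℝ)
    (hprim : ∀ j, ∀ x ∈ Ioo a b, HasDerivAt (ψ j) (ψd j x) x)
    (hmemd : ∀ j, IntegrableOn (fun x => w x * ψd j x ^ 2 * ρ x) (Ioo a b))
    (hdorth : ∀ j m, 1 ≤ j → 1 ≤ m → j ≠ m →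
      ∫ x in Ioo a b, w x * ψd j x * ψd m x * ρ x = 0)
    (hdpos : ∀ j, 1 ≤ j → 0 < ∫ x in Ioo a b, w x * ψd j x ^ 2 * ρ x)
    (hcompleteW : ∀ f : ℝ → ℝ, Measurable f →
      IntegrableOn (fun x => w x * f x ^ 2 * ρ x) (Ioo a b) →
      (∀ j, 1 ≤ j → ∫ x in Ioo a b, f x * ψd j x * w x * ρ x = 0) →
      ∀ᵐ x ∂(volume.restrict (Ioo a b)), f x = 0)
    (f f' : ℝ → ℝ) (hf : MemH1 a b ρ w f f') :
    ∀ x ∈ Ioo a b, ∀ x₀ ∈ Ioo a b,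
      HasSum (fun j : ℕ => if j = 0 then 0 else
          ((∫ t in Ioo a b, w t * f' t * ψd j t * ρ t) /
            (∫ t in Ioo a b, w t * ψd j t ^ 2 * ρ t)) * (ψ j x - ψ j x₀))
        (f x - f x₀) :=
  stmt7_general a b ρ w hρpos hwpos hinv ψ ψd hprim hmemd hdorth hdpos hcompleteW f f' hf
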